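/- arXiv:1804.04006 — 2 statements merged into one kernel-verified Lean document; each statement's English description precedes it below -/
import Mathlib

section
/- Let q ≥ 2 be an integer and T a triangle presentation of order q on a finite base set F. Let P = YY* on ℂ^F ⊗ ℂ^F, and let Q be the orthogonal projection of (ℂ^F)^{⊗3} onto the linear span of the vectors e_i ⊗ ξ_i (i ∈ F), i.e. Q = (q+1)^{-1} Σ_{i∈F} |e_i ⊗ ξ_i⟩⟨e_i ⊗ ξ_i|. Then, as operators on (ℂ^F)^{⊗3}: (1 ⊗ P)(P ⊗ 1)(1 ⊗ P) = (q+1)^{-3} [ (q+1)(1 ⊗ P) + (q² − 1)Q + EE* ]. -/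
/-!
Write `P = Y Y*` and `Y = (q+1)^{-1/2} Ξ`, where `Ξ` is the 0/1 matrix with columns `ξ_i`,
and put `K = 1 ⊗ Ξ`. Then `1 ⊗ P = (q+1)⁻¹ K K*`, so the left-hand side equals
`(q+1)⁻² K (K* (P ⊗ 1) K) K*`. The `((a,i),(a',n))` entry of `K* (P ⊗ 1) K` is `(q+1)⁻¹`
times the number of `(u,z,v,m)` with `(i,u,z), (m,a,u), (m,a',v), (n,v,z) ∈ T`, and the
axioms of a triangle presentation evaluate this count as
`δ_{aa'}δ_{in} + (q-1) δ_{aa'}δ_{in}δ_{ai} + δ_{ai}δ_{a'n}`. Thus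
`K* (P ⊗ 1) K = (q+1)⁻¹ (1 + (q-1) D + δ δ*)`, with `δ = Σ_a e_a ⊗ e_a` and `D` the
projection onto the span of the `e_a ⊗ e_a`. Conjugating back by `K` turns `1`, `D` and `δ`
into `(q+1)(1 ⊗ P)`, `(q+1) Q` and `E`.

The count: for `a = a'` a configuration forces `u = v` and then `i = n`, and is determined by
`u`, a common successor of `i` and `a` (there are `q+1` of them if `a = i`, otherwise one).
For `a ≠ a'` the vertex `m` is the common predecessor of `a` and `a'`, which fixes `u` and `v`;
then `u ≠ v` and `z`, `m` are both common successors of `u` and `v`, so `z = m`, which forces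
`i = a` and `n = a'`.
-/

/-- A triangle presentation of order `q` on the finite base set `F`:
(i) cyclic invariance; (ii) for each pair `(i,j)` there is at most one `k` with
`(i,j,k) ∈ T` (one writes `i → j` when such `k` exists; `i` is then a predecessor of `j`
and `j` a successor of `i`); (iii) any two distinct points have exactly one common
predecessor and exactly one common successor; (iv) every point has exactly `q+1`
predecessors and exactly `q+1` successors. -/
def IsTrianglePresentation {F : Type*} [Fintype F] (q : ℕ) (T : Set (F × F × F)) : Prop :=
  (∀ i j k : F, (i, j, k) ∈ T → (k, i, j) ∈ T) ∧
  (∀ i j k k' : F, (i, j, k) ∈ T → (i, j, k') ∈ T → k = k') ∧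
  (∀ a b : F, a ≠ b →
      (∃! p : F, (∃ k, (p, a, k) ∈ T) ∧ ∃ k, (p, b, k) ∈ T) ∧
      (∃! s : F, (∃ k, (a, s, k) ∈ T) ∧ ∃ k, (b, s, k) ∈ T)) ∧
  (∀ x : F, {p : F | ∃ k, (p, x, k) ∈ T}.ncard = q + 1 ∧
      {s : F | ∃ k, (x, s, k) ∈ T}.ncard = q + 1)

open Matrix

variable {F : Type*} [Fintype F] [DecidableEq F]

/-- The vector `E = Σ_{(a,b,c)∈T} e_a ⊗ e_b ⊗ e_c ∈ (ℂ^F)^{⊗3}`, in the identification of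
`(ℂ^F)^{⊗3}` with functions `F³ → ℂ`. -/
noncomputable def Evec (T : Set (F × F × F)) [DecidablePred (· ∈ T)] : F × F × F → ℂ :=
  fun x => if x ∈ T then 1 else 0

/-- The vectors `ξ_i = Σ_{(i,j,k)∈T} e_j ⊗ e_k ∈ ℂ^F ⊗ ℂ^F`. -/
noncomputable def xiVec (T : Set (F × F × F)) [DecidablePred (· ∈ T)] : F → (F × F → ℂ) :=
  fun i p => if (i, p.1, p.2) ∈ T then 1 else 0

/-- The matrix (in the standard orthonormal bases) of the map `Y : ℂ^F → ℂ^F ⊗ ℂ^F`,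
`Y e_i = (q+1)^{-1/2} Σ_{(i,j,k)∈T} e_j ⊗ e_k`. -/
noncomputable def Ymat (q : ℕ) (T : Set (F × F × F)) [DecidablePred (· ∈ T)] :
    Matrix (F × F) F ℂ :=
  Matrix.of fun p i =>
    if (i, p.1, p.2) ∈ T then (((Real.sqrt ((q : ℝ) + 1))⁻¹ : ℝ) : ℂ) else 0

/-- The matrix of `1 ⊗ P : (ℂ^F)^{⊗3} → (ℂ^F)^{⊗3}`, where `P = YY*`. -/
noncomputable def onePmat (q : ℕ) (T : Set (F × F × F)) [DecidablePred (· ∈ T)] :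
    Matrix (F × F × F) (F × F × F) ℂ :=
  Matrix.of fun x y => if x.1 = y.1 then (Ymat q T * (Ymat q T)ᴴ) x.2 y.2 else 0

/-- The matrix of `P ⊗ 1 : (ℂ^F)^{⊗3} → (ℂ^F)^{⊗3}`, where `P = YY*`. -/
noncomputable def pOneMat (q : ℕ) (T : Set (F × F × F)) [DecidablePred (· ∈ T)] :
    Matrix (F × F × F) (F × F × F) ℂ :=
  Matrix.of fun x y =>
    if x.2.2 = y.2.2 then (Ymat q T * (Ymat q T)ᴴ) (x.1, x.2.1) (y.1, y.2.1) else 0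

/-- The vectors `e_i ⊗ ξ_i ∈ (ℂ^F)^{⊗3}`. -/
noncomputable def etaVec (T : Set (F × F × F)) [DecidablePred (· ∈ T)] :
    F → (F × F × F → ℂ) :=
  fun i x => if x.1 = i ∧ (i, x.2.1, x.2.2) ∈ T then 1 else 0

/-- The orthogonal projection `Q = (q+1)⁻¹ Σ_{i∈F} |e_i ⊗ ξ_i⟩⟨e_i ⊗ ξ_i|` of `(ℂ^F)^{⊗3}`
onto the span of the vectors `e_i ⊗ ξ_i`. -/
noncomputable def Qmat (q : ℕ) (T : Set (F × F × F)) [DecidablePred (· ∈ T)] :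
    Matrix (F × F × F) (F × F × F) ℂ :=
  ((q : ℂ) + 1)⁻¹ • ∑ i : F, Matrix.vecMulVec (etaVec T i) (star (etaVec T i))


section TrianglePresentation

open Finset

variable {F : Type*} [Fintype F] {q : ℕ} {T : Set (F × F × F)}

namespace IsTrianglePresentation

theorem rotate (hT : IsTrianglePresentation q T) {i j k : F} (h : (i, j, k) ∈ T) :
    (j, k, i) ∈ T :=
  hT.1 _ _ _ (hT.1 _ _ _ h)

theorem thd_unique (hT : IsTrianglePresentation q T) {i j k k' : F} (h : (i, j, k) ∈ T)
    (h' : (i, j, k') ∈ T) : k = k' :=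
  hT.2.1 _ _ _ _ h h'

theorem fst_unique (hT : IsTrianglePresentation q T) {i i' j k : F} (h : (i, j, k) ∈ T)
    (h' : (i', j, k) ∈ T) : i = i' :=
  hT.thd_unique (hT.rotate h) (hT.rotate h')

theorem snd_unique (hT : IsTrianglePresentation q T) {i j j' k : F} (h : (i, j, k) ∈ T)
    (h' : (i, j', k) ∈ T) : j = j' :=
  hT.thd_unique (hT.1 _ _ _ h) (hT.1 _ _ _ h')

theorem exists_common_pred (hT : IsTrianglePresentation q T) {a b : F} (hab : a ≠ b) :
    ∃ p k k', (p, a, k) ∈ T ∧ (p, b, k') ∈ T := by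
  obtain ⟨p, ⟨⟨k, hk⟩, ⟨k', hk'⟩⟩, -⟩ := (hT.2.2.1 a b hab).1
  exact ⟨p, k, k', hk, hk'⟩

theorem common_pred_unique (hT : IsTrianglePresentation q T) {a b p p' k l k' l' : F}
    (hab : a ≠ b) (hpa : (p, a, k) ∈ T) (hpb : (p, b, l) ∈ T) (hpa' : (p', a, k') ∈ T)
    (hpb' : (p', b, l') ∈ T) : p = p' :=
  (hT.2.2.1 a b hab).1.unique ⟨⟨k, hpa⟩, ⟨l, hpb⟩⟩ ⟨⟨k', hpa'⟩, ⟨l', hpb'⟩⟩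

theorem common_succ_unique (hT : IsTrianglePresentation q T) {a b s s' k l k' l' : F}
    (hab : a ≠ b) (has : (a, s, k) ∈ T) (hbs : (b, s, l) ∈ T) (has' : (a, s', k') ∈ T)
    (hbs' : (b, s', l') ∈ T) : s = s' :=
  (hT.2.2.1 a b hab).2.unique ⟨⟨k, has⟩, ⟨l, hbs⟩⟩ ⟨⟨k', has'⟩, ⟨l', hbs'⟩⟩

end IsTrianglePresentation

variable [DecidablePred (· ∈ T)]

variable (T) in
def succFinset (a : F) : Finset F := {y | ∃ z, (a, y, z) ∈ T}

variable (T) in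
def pathFinset (a i a' n : F) : Finset (F × F × F × F) :=
  {w | (i, w.1, w.2.1) ∈ T ∧ (w.2.2.2, a, w.1) ∈ T ∧ (w.2.2.2, a', w.2.2.1) ∈ T ∧
    (n, w.2.2.1, w.2.1) ∈ T}

theorem mem_pathFinset {a i a' n u z v m : F} :
    (u, z, v, m) ∈ pathFinset T a i a' n ↔
      (i, u, z) ∈ T ∧ (m, a, u) ∈ T ∧ (m, a', v) ∈ T ∧ (n, v, z) ∈ T := by
  simp [pathFinset]

namespace IsTrianglePresentation

theorem card_succFinset (hT : IsTrianglePresentation q T) (a : F) :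
    #(succFinset T a) = q + 1 := by
  rw [← (hT.2.2.2 a).2, ← Set.ncard_coe_finset]
  simp [succFinset]

theorem pathFinset_self_eq_empty (hT : IsTrianglePresentation q T) {a i n : F} (hin : i ≠ n) :
    pathFinset T a i a n = ∅ := by
  refine eq_empty_of_forall_notMem ?_
  rintro ⟨u, z, v, m⟩ hw
  obtain ⟨hiu, hau, hav, hnv⟩ := mem_pathFinset.mp hw
  obtain rfl := hT.thd_unique hau hav
  exact hin (hT.fst_unique hiu hnv)

theorem eq_of_mem_pathFinset (hT : IsTrianglePresentation q T) {a i a' n : F}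
    (haa : a ≠ a') {w : F × F × F × F} (hw : w ∈ pathFinset T a i a' n) : a = i ∧ a' = n := by
  obtain ⟨u, z, v, m⟩ := w
  obtain ⟨hiu, hau, hav, hnv⟩ := mem_pathFinset.mp hw
  have huv : u ≠ v := by
    rintro rfl
    exact haa (hT.snd_unique hau hav)
  obtain rfl : z = m := hT.common_succ_unique huv (hT.rotate hiu) (hT.rotate hnv)
    (hT.rotate (hT.rotate hau)) (hT.rotate (hT.rotate hav))
  exact ⟨hT.fst_unique (hT.rotate hau) hiu, hT.fst_unique (hT.rotate hav) hnv⟩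

variable [DecidableEq F]

theorem card_succFinset_inter (hT : IsTrianglePresentation q T) {a b : F} (hab : a ≠ b) :
    #(succFinset T a ∩ succFinset T b) = 1 := by
  obtain ⟨s, ⟨⟨k, hk⟩, ⟨l, hl⟩⟩, -⟩ := (hT.2.2.1 a b hab).2
  refine card_eq_one.mpr ⟨s, eq_singleton_iff_unique_mem.mpr ⟨?_, ?_⟩⟩
  · simp only [mem_inter, succFinset, mem_filter, mem_univ, true_and]
    exact ⟨⟨k, hk⟩, ⟨l, hl⟩⟩
  · simp only [mem_inter, succFinset, mem_filter, mem_univ, true_and]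
    rintro s' ⟨⟨k', hk'⟩, ⟨l', hl'⟩⟩
    exact hT.common_succ_unique hab hk' hl' hk hl

theorem card_pathFinset_self (hT : IsTrianglePresentation q T) (a i : F) :
    #(pathFinset T a i a i) = #(succFinset T i ∩ succFinset T a) := by
  refine card_nbij (fun w => w.1) ?_ ?_ ?_
  · rintro ⟨u, z, v, m⟩ hw
    obtain ⟨hiu, hau, -, -⟩ := mem_pathFinset.mp hw
    simp only [coe_inter, succFinset, coe_filter, mem_univ, true_and]
    exact ⟨⟨z, hiu⟩, ⟨m, hT.rotate hau⟩⟩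
  · rintro ⟨u, z, v, m⟩ hw ⟨u', z', v', m'⟩ hw' (rfl : u = u')
    obtain ⟨hiu, hau, hav, -⟩ := mem_pathFinset.mp hw
    obtain ⟨hiu', hau', hav', -⟩ := mem_pathFinset.mp hw'
    obtain rfl := hT.fst_unique hau hau'
    obtain rfl := hT.thd_unique hiu hiu'
    obtain rfl := hT.thd_unique hau hav
    obtain rfl := hT.thd_unique hau hav'
    rfl
  · intro y hy
    simp only [coe_inter, succFinset, coe_filter, mem_univ, true_and] at hy
    obtain ⟨⟨z, hz⟩, ⟨m, hm⟩⟩ := hy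
    exact ⟨(y, z, y, m), mem_pathFinset.mpr ⟨hz, hT.1 _ _ _ hm, hT.1 _ _ _ hm, hz⟩, rfl⟩

theorem card_pathFinset_of_ne (hT : IsTrianglePresentation q T) {a a' : F} (haa : a ≠ a')
    (i n : F) : #(pathFinset T a i a' n) = if a = i ∧ a' = n then 1 else 0 := by
  split_ifs with h
  · obtain ⟨rfl, rfl⟩ := h
    obtain ⟨p, k, k', hpa, hpa'⟩ := hT.exists_common_pred haa
    refine card_eq_one.mpr ⟨(k, p, k', p), eq_singleton_iff_unique_mem.mpr
      ⟨mem_pathFinset.mpr ⟨hT.rotate hpa, hpa, hpa', hT.rotate hpa'⟩, ?_⟩⟩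
    rintro ⟨u, z, v, m⟩ hw
    obtain ⟨hiu, hau, hav, -⟩ := mem_pathFinset.mp hw
    obtain rfl := hT.common_pred_unique haa hau hav hpa hpa'
    obtain rfl := hT.thd_unique hau hpa
    obtain rfl := hT.thd_unique hav hpa'
    obtain rfl := hT.thd_unique hiu (hT.rotate hpa)
    rfl
  · exact card_eq_zero.mpr <|
      eq_empty_of_forall_notMem fun w hw => h (hT.eq_of_mem_pathFinset haa hw)

end IsTrianglePresentation

end TrianglePresentation

section Matrices

open scoped Kronecker

variable {F : Type*} (q : ℕ) (T : Set (F × F × F)) [DecidablePred (· ∈ T)]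

noncomputable def xiMat : Matrix (F × F) F ℂ := Matrix.of fun p i => xiVec T i p

theorem Ymat_eq_smul : Ymat q T = (((Real.sqrt ((q : ℝ) + 1))⁻¹ : ℝ) : ℂ) • xiMat T := by
  ext p i
  simp [Ymat, xiMat, xiVec]

theorem Ymat_mul_conjTranspose [Fintype F] :
    Ymat q T * (Ymat q T)ᴴ = ((q : ℂ) + 1)⁻¹ • (xiMat T * (xiMat T)ᴴ) := by
  rw [Ymat_eq_smul, conjTranspose_smul, Matrix.smul_mul, Matrix.mul_smul, smul_smul,
    Complex.star_def, Complex.conj_ofReal, ← Complex.ofReal_mul, ← mul_inv,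
    Real.mul_self_sqrt (by positivity)]
  push_cast
  rfl

variable [DecidableEq F]

noncomputable def oneXiMat : Matrix (F × F × F) (F × F) ℂ := (1 : Matrix F F ℂ) ⊗ₖ xiMat T

variable (F) in
def diagVec : F × F → ℂ := fun p => if p.1 = p.2 then 1 else 0

theorem oneXiMat_apply (x : F × F × F) (p : F × F) :
    oneXiMat T x p = if x.1 = p.1 ∧ (p.2, x.2.1, x.2.2) ∈ T then 1 else 0 := by
  by_cases h : x.1 = p.1 <;> simp [oneXiMat, kroneckerMap_apply, one_apply, xiMat, xiVec, h]

theorem oneXiMat_apply_self (x : F × F × F) (a : F) : oneXiMat T x (a, a) = etaVec T a x := by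
  rw [oneXiMat_apply]
  rfl

variable [Fintype F]

theorem sum_etaVec : ∑ a, etaVec T a = Evec T := by
  ext x
  simp [etaVec, Evec, ite_and]

theorem sum_mul_diagVec (f : F × F → ℂ) : ∑ p, f p * diagVec F p = ∑ a, f (a, a) := by
  simp [diagVec, Fintype.sum_prod_type]

theorem onePmat_eq : onePmat q T = ((q : ℂ) + 1)⁻¹ • (oneXiMat T * (oneXiMat T)ᴴ) := by
  rw [oneXiMat, conjTranspose_kronecker, ← mul_kronecker_mul, conjTranspose_one, Matrix.mul_one,
    ← kronecker_smul, ← Ymat_mul_conjTranspose]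
  ext x y
  simp [onePmat, kroneckerMap_apply, one_apply]

theorem pOneMat_apply (x y : F × F × F) :
    pOneMat q T x y = ((q : ℂ) + 1)⁻¹ *
      ∑ m, if (m, x.1, x.2.1) ∈ T ∧ (m, y.1, y.2.1) ∈ T ∧ x.2.2 = y.2.2 then 1 else 0 := by
  simp only [pOneMat, Ymat_mul_conjTranspose]
  simp only [Matrix.of_apply, Matrix.smul_apply, Matrix.mul_apply, conjTranspose_apply, xiMat,
    xiVec, smul_eq_mul, Finset.mul_sum]
  split_ifs with h
  · refine Finset.sum_congr rfl fun m _ => ?_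
    split_ifs <;> simp_all
  · simp [h]

theorem oneXiMat_mulVec_diagVec : oneXiMat T *ᵥ diagVec F = Evec T := by
  ext x
  simp only [mulVec, dotProduct, sum_mul_diagVec, oneXiMat_apply_self, ← Finset.sum_apply,
    sum_etaVec]

theorem oneXiMat_mul_diagonal_mul :
    oneXiMat T * diagonal (diagVec F) * (oneXiMat T)ᴴ =
      ∑ i : F, vecMulVec (etaVec T i) (star (etaVec T i)) := by
  ext x y
  rw [Matrix.mul_apply]
  simp only [mul_diagonal, conjTranspose_apply, mul_right_comm _ (diagVec F _), sum_mul_diagVec,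
    oneXiMat_apply_self, Matrix.sum_apply, vecMulVec_apply, Pi.star_apply]

open Finset in
theorem conjTranspose_oneXiMat_mul_pOneMat_mul :
    (oneXiMat T)ᴴ * pOneMat q T * oneXiMat T =
      ((q : ℂ) + 1)⁻¹ •
        Matrix.of fun p p' : F × F => (#(pathFinset T p.1 p.2 p'.1 p'.2) : ℂ) := by
  ext ⟨a, i⟩ ⟨a', n⟩
  have hterm : ∀ (A B C : Prop) [Decidable A] [Decidable B] [Decidable C] (c : ℂ),
      star (if A then (1 : ℂ) else 0) * (c * if B then 1 else 0) * (if C then 1 else 0) =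
        c * if A ∧ B ∧ C then 1 else 0 := by
    intros
    split_ifs <;> simp_all
  simp only [Matrix.mul_apply, conjTranspose_apply, oneXiMat_apply, pOneMat_apply,
    Matrix.smul_apply, Matrix.of_apply, smul_eq_mul, sum_mul, mul_sum, hterm]
  simp only [← mul_sum, ← Fintype.sum_prod_type']
  rw [sum_boole]
  congr 2
  refine card_nbij' (fun w => (w.2.1.2.1, w.2.1.2.2, w.1.2.1, w.2.2))
    (fun w => ((a', w.2.2.1, w.2.1), (a, w.1, w.2.1), w.2.2.2)) ?_ ?_ ?_ ?_
  · rintro ⟨⟨y1, y2, y3⟩, ⟨x1, x2, x3⟩, m⟩ h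
    simp only [coe_filter, mem_univ, true_and, Set.mem_ofPred_eq, pathFinset] at h ⊢
    obtain ⟨⟨rfl, h1⟩, ⟨h2, h3, rfl⟩, rfl, h4⟩ := h
    exact ⟨h1, h2, h3, h4⟩
  · rintro ⟨u, z, v, m⟩ h
    simp only [coe_filter, mem_univ, true_and, Set.mem_ofPred_eq, pathFinset] at h ⊢
    tauto
  · rintro ⟨⟨y1, y2, y3⟩, ⟨x1, x2, x3⟩, m⟩ h
    simp only [coe_filter, mem_univ, true_and, Set.mem_ofPred_eq] at h
    obtain ⟨⟨rfl, -⟩, ⟨-, -, rfl⟩, rfl, -⟩ := h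
    rfl
  · intro w _
    rfl

end Matrices

open Finset in
theorem IsTrianglePresentation.of_card_pathFinset {q : ℕ} {T : Set (F × F × F)}
    [DecidablePred (· ∈ T)] (hT : IsTrianglePresentation q T) :
    (Matrix.of fun p p' : F × F => (#(pathFinset T p.1 p.2 p'.1 p'.2) : ℂ)) =
      1 + ((q : ℂ) - 1) • diagonal (diagVec F) + vecMulVec (diagVec F) (star (diagVec F)) := by
  ext ⟨a, i⟩ ⟨a', n⟩
  simp only [of_apply, Matrix.add_apply, Matrix.smul_apply, Matrix.one_apply, diagonal_apply,
    vecMulVec_apply, Pi.star_apply, diagVec, Prod.mk.injEq, smul_eq_mul]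
  rcases eq_or_ne a a' with rfl | haa
  · rcases eq_or_ne i n with rfl | hin
    · rw [hT.card_pathFinset_self]
      rcases eq_or_ne a i with rfl | hai
      · simp [hT.card_succFinset]
      · simp [hT.card_succFinset_inter (Ne.symm hai), hai]
    · rw [hT.pathFinset_self_eq_empty hin]
      rcases eq_or_ne a i with rfl | hai <;> simp [*]
  · simp [hT.card_pathFinset_of_ne haa, haa, ← ite_and, and_comm]

theorem oneP_pOne_oneP_general (q : ℕ) (T : Set (F × F × F)) [DecidablePred (· ∈ T)]
    (hT : IsTrianglePresentation q T) :
    onePmat q T * pOneMat q T * onePmat q T =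
      (((q : ℂ) + 1) ^ 3)⁻¹ •
        (((q : ℂ) + 1) • onePmat q T + ((q : ℂ) ^ 2 - 1) • Qmat q T +
          Matrix.vecMulVec (Evec T) (star (Evec T))) := by
  set K := oneXiMat T with hK
  have hmid : Kᴴ * pOneMat q T * K = ((q : ℂ) + 1)⁻¹ •
      (1 + ((q : ℂ) - 1) • diagonal (diagVec F) + vecMulVec (diagVec F) (star (diagVec F))) := by
    rw [conjTranspose_oneXiMat_mul_pOneMat_mul, hT.of_card_pathFinset]
  calc onePmat q T * pOneMat q T * onePmat q T
      = ((q : ℂ) + 1)⁻¹ • ((q : ℂ) + 1)⁻¹ • (K * (Kᴴ * pOneMat q T * K) * Kᴴ) := by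
        rw [onePmat_eq, ← hK]
        simp only [Matrix.smul_mul, Matrix.mul_smul, Matrix.mul_assoc]
    _ = ((q : ℂ) + 1)⁻¹ • ((q : ℂ) + 1)⁻¹ • ((q : ℂ) + 1)⁻¹ • (K * Kᴴ +
          ((q : ℂ) - 1) • (K * diagonal (diagVec F) * Kᴴ) +
          vecMulVec (K *ᵥ diagVec F) (star (K *ᵥ diagVec F))) := by
        rw [hmid, star_mulVec, ← vecMulVec_mul, ← mul_vecMulVec]
        simp only [Matrix.mul_smul, Matrix.smul_mul, Matrix.mul_add, Matrix.add_mul,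
          Matrix.mul_one, Matrix.mul_assoc]
    _ = _ := by
        rw [onePmat_eq, ← hK, Qmat, ← oneXiMat_mul_diagonal_mul, oneXiMat_mulVec_diagVec]
        match_scalars <;> field_simp
        ring

/-- `(1 ⊗ P)(P ⊗ 1)(1 ⊗ P) = (q+1)⁻³ [ (q+1)(1 ⊗ P) + (q² − 1)Q + EE* ]` as operators on
`(ℂ^F)^{⊗3}`, where `P = YY*`. -/
theorem oneP_pOne_oneP (q : ℕ) (hq : 2 ≤ q) (T : Set (F × F × F)) [DecidablePred (· ∈ T)]
    (hT : IsTrianglePresentation q T) :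
    onePmat q T * pOneMat q T * onePmat q T =
      (((q : ℂ) + 1) ^ 3)⁻¹ •
        (((q : ℂ) + 1) • onePmat q T + ((q : ℂ) ^ 2 - 1) • Qmat q T +
          Matrix.vecMulVec (Evec T) (star (Evec T))) :=
  oneP_pOne_oneP_general q T hT
end

section
/- Fix μ ∈ (−1,1) with μ ≠ 0, let E ∈ (ℂ³)^{⊗3} be the q-deformed determinant vector, and let P = μ^{-2}(1+μ²)^{-1}(E* ⊗ 1 ⊗ 1)(1 ⊗ 1 ⊗ E) on ℂ³ ⊗ ℂ³. Let Y : ℂ³ → ℂ³ ⊗ ℂ³ be any isometry with YY* = P. Define s = μ^{-1}(1+μ²)^{-1/2}(1 ⊗ Y*)E and t = μ^{-1}(1+μ²)^{-1/2}(Y* ⊗ 1)E, both viewed as linear maps ℂ → ℂ³ ⊗ ℂ³. Then s and t solve the conjugate equations: (t* ⊗ 1)(1 ⊗ s) = id_{ℂ³} and (s* ⊗ 1)(1 ⊗ t) = id_{ℂ³}. Moreover s*s = t*t = (μ² + 1 + μ^{-2})·id_ℂ. -/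
/-! Reshape `E` into `F : ℂ³ → ℂ³ ⊗ ℂ³` (contracting its last leg) and `G : ℂ³ ⊗ ℂ³ → ℂ³`
(contracting its first leg). Then `P = κ (F G)ᵀ` with `κ = μ⁻²(1+μ²)⁻¹`, and up to a real scalar
`c` with `c² = κ` the vectors `s` and `t` are the matrices `Y* Gᵀ` and `(Y* F)ᵀ`. The first
conjugate equation becomes `Y* P Y = 1`. The rest rests on the identity `κ G F = 1`, checked by
direct computation, which makes `P` fix the columns of `Gᵀ` and the rows of `Fᵀ`: as `P` is
symmetric (Hermitian with real entries), the second conjugate equation becomes `κ (G F)ᵀ = 1` and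
both squared norms become `κ ‖E‖² = μ² + 1 + μ⁻²`.
-/

open Matrix

/-- The q-deformed determinant vector
`E = e₁₂₃ − μe₁₃₂ − μe₂₁₃ + μ²e₂₃₁ + μ²e₃₁₂ − μ³e₃₂₁ ∈ (ℂ³)^{⊗3}`, in the identification
of `(ℂ³)^{⊗3}` with functions `(Fin 3)³ → ℂ` (with the standard basis indexed from `0`). -/
noncomputable def Ev (μ : ℝ) : Fin 3 × Fin 3 × Fin 3 → ℂ := fun x =>
  if x = (0, 1, 2) then 1
  else if x = (0, 2, 1) then -(μ : ℂ)
  else if x = (1, 0, 2) then -(μ : ℂ)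
  else if x = (1, 2, 0) then (μ : ℂ) ^ 2
  else if x = (2, 0, 1) then (μ : ℂ) ^ 2
  else if x = (2, 1, 0) then -(μ : ℂ) ^ 3
  else 0

/-- The matrix of `1 ⊗ 1 ⊗ E : ℂ³ ⊗ ℂ³ → (ℂ³)^{⊗5}`. -/
noncomputable def oneOneE3 (μ : ℝ) :
    Matrix (Fin 3 × Fin 3 × Fin 3 × Fin 3 × Fin 3) (Fin 3 × Fin 3) ℂ :=
  Matrix.of fun x p =>
    if x.1 = p.1 ∧ x.2.1 = p.2 then Ev μ (x.2.2.1, x.2.2.2.1, x.2.2.2.2) else 0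

/-- The matrix of `E* ⊗ 1 ⊗ 1 : (ℂ³)^{⊗5} → ℂ³ ⊗ ℂ³`. -/
noncomputable def estarOneOne3 (μ : ℝ) :
    Matrix (Fin 3 × Fin 3) (Fin 3 × Fin 3 × Fin 3 × Fin 3 × Fin 3) ℂ :=
  Matrix.of fun p x =>
    if p.1 = x.2.2.2.1 ∧ p.2 = x.2.2.2.2 then star (Ev μ (x.1, x.2.1, x.2.2.1)) else 0

/-- The matrix of `E ⊗ 1 ⊗ 1 : ℂ³ ⊗ ℂ³ → (ℂ³)^{⊗5}`. -/
noncomputable def eOneOne3 (μ : ℝ) :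
    Matrix (Fin 3 × Fin 3 × Fin 3 × Fin 3 × Fin 3) (Fin 3 × Fin 3) ℂ :=
  Matrix.of fun x p =>
    if x.2.2.2.1 = p.1 ∧ x.2.2.2.2 = p.2 then Ev μ (x.1, x.2.1, x.2.2.1) else 0

/-- The matrix of `1 ⊗ 1 ⊗ E* : (ℂ³)^{⊗5} → ℂ³ ⊗ ℂ³`. -/
noncomputable def oneOneEstar3 (μ : ℝ) :
    Matrix (Fin 3 × Fin 3) (Fin 3 × Fin 3 × Fin 3 × Fin 3 × Fin 3) ℂ :=
  Matrix.of fun p x =>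
    if p.1 = x.1 ∧ p.2 = x.2.1 then star (Ev μ (x.2.2.1, x.2.2.2.1, x.2.2.2.2)) else 0

/-- The operator `P = μ⁻²(1+μ²)⁻¹ (E* ⊗ 1 ⊗ 1)(1 ⊗ 1 ⊗ E)` on `ℂ³ ⊗ ℂ³`. -/
noncomputable def Pmat3 (μ : ℝ) : Matrix (Fin 3 × Fin 3) (Fin 3 × Fin 3) ℂ :=
  (((μ : ℂ) ^ 2)⁻¹ * (1 + (μ : ℂ) ^ 2)⁻¹) • (estarOneOne3 μ * oneOneE3 μ)

/-- The matrix of `1 ⊗ Y* : (ℂ³)^{⊗3} → ℂ³ ⊗ ℂ³` (with `Y*` acting on the last two legs). -/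
noncomputable def oneYstar3 (Y : Matrix (Fin 3 × Fin 3) (Fin 3) ℂ) :
    Matrix (Fin 3 × Fin 3) (Fin 3 × Fin 3 × Fin 3) ℂ :=
  Matrix.of fun p x => if p.1 = x.1 then Yᴴ p.2 x.2 else 0

/-- The matrix of `Y* ⊗ 1 : (ℂ³)^{⊗3} → ℂ³ ⊗ ℂ³` (with `Y*` acting on the first two legs). -/
noncomputable def ystarOne3 (Y : Matrix (Fin 3 × Fin 3) (Fin 3) ℂ) :
    Matrix (Fin 3 × Fin 3) (Fin 3 × Fin 3 × Fin 3) ℂ :=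
  Matrix.of fun p x => if p.2 = x.2.2 then Yᴴ p.1 (x.1, x.2.1) else 0

/-- The vector `s = μ⁻¹(1+μ²)^{-1/2}(1 ⊗ Y*)E ∈ ℂ³ ⊗ ℂ³`. -/
noncomputable def svec3 (μ : ℝ) (Y : Matrix (Fin 3 × Fin 3) (Fin 3) ℂ) : Fin 3 × Fin 3 → ℂ :=
  (((μ⁻¹ : ℝ) : ℂ) * (((Real.sqrt (1 + μ ^ 2))⁻¹ : ℝ) : ℂ)) •
    (oneYstar3 Y).mulVec (Ev μ)

/-- The vector `t = μ⁻¹(1+μ²)^{-1/2}(Y* ⊗ 1)E ∈ ℂ³ ⊗ ℂ³`. -/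
noncomputable def tvec3 (μ : ℝ) (Y : Matrix (Fin 3 × Fin 3) (Fin 3) ℂ) : Fin 3 × Fin 3 → ℂ :=
  (((μ⁻¹ : ℝ) : ℂ) * (((Real.sqrt (1 + μ ^ 2))⁻¹ : ℝ) : ℂ)) •
    (ystarOne3 Y).mulVec (Ev μ)

/-- The matrix of `1 ⊗ v : ℂ³ → (ℂ³)^{⊗3}` for a vector `v ∈ ℂ³ ⊗ ℂ³`. -/
noncomputable def oneVec3 (v : Fin 3 × Fin 3 → ℂ) : Matrix (Fin 3 × Fin 3 × Fin 3) (Fin 3) ℂ :=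
  Matrix.of fun x c => if x.1 = c then v x.2 else 0

/-- The matrix of `v* ⊗ 1 : (ℂ³)^{⊗3} → ℂ³` for a vector `v ∈ ℂ³ ⊗ ℂ³`. -/
noncomputable def vecStarOne3 (v : Fin 3 × Fin 3 → ℂ) : Matrix (Fin 3) (Fin 3 × Fin 3 × Fin 3) ℂ :=
  Matrix.of fun c x => if c = x.2.2 then star (v (x.1, x.2.1)) else 0

section Reshape

variable {ι : Type*}

def curryLast (e : ι × ι × ι → ℂ) : Matrix (ι × ι) ι ℂ :=
  of fun x k => e (x.1, x.2, k)

def curryFirst (e : ι × ι × ι → ℂ) : Matrix ι (ι × ι) ℂ :=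
  of fun i x => e (i, x.1, x.2)

theorem conjTranspose_curryLast {e : ι × ι × ι → ℂ} (he : star e = e) :
    (curryLast e)ᴴ = (curryLast e)ᵀ := by
  ext k x
  simpa [curryLast] using congr_fun he (x.1, x.2, k)

theorem conjTranspose_curryFirst {e : ι × ι × ι → ℂ} (he : star e = e) :
    (curryFirst e)ᴴ = (curryFirst e)ᵀ := by
  ext x i
  simpa [curryFirst] using congr_fun he (i, x.1, x.2)

theorem trace_conjTranspose_curryLast_mul_self [Fintype ι] (e : ι × ι × ι → ℂ) :
    ((curryLast e)ᴴ * curryLast e).trace = star e ⬝ᵥ e := by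
  simp only [trace, diag_apply, mul_apply, conjTranspose_apply, curryLast, of_apply, dotProduct,
    Pi.star_apply, Fintype.sum_prod_type]
  rw [Finset.sum_comm]
  exact Finset.sum_congr rfl fun _ _ => Finset.sum_comm

theorem trace_curryFirst_mul_conjTranspose_self [Fintype ι] (e : ι × ι × ι → ℂ) :
    (curryFirst e * (curryFirst e)ᴴ).trace = star e ⬝ᵥ e := by
  simp only [trace, diag_apply, mul_apply, conjTranspose_apply, curryFirst, of_apply, dotProduct,
    Pi.star_apply, Fintype.sum_prod_type, mul_comm]

end Reshape

section Projection

variable {m n R : Type*} [Fintype m] [Fintype n] [DecidableEq m] [CommSemiring R]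
  {F : Matrix n m R} {G : Matrix m n R} {κ : R}

theorem transpose_mul_smul_transpose_mul_eq (h : κ • (G * F) = 1) :
    Fᵀ * (κ • (F * G)ᵀ) = Fᵀ := by
  calc Fᵀ * (κ • (F * G)ᵀ) = (κ • (G * F))ᵀ * Fᵀ := by
        rw [transpose_mul, transpose_smul, transpose_mul, Matrix.mul_smul, Matrix.smul_mul,
          Matrix.mul_assoc]
    _ = Fᵀ := by rw [h, transpose_one, Matrix.one_mul]

theorem smul_transpose_mul_mul_transpose_eq (h : κ • (G * F) = 1) :
    κ • (F * G)ᵀ * Gᵀ = Gᵀ := by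
  calc κ • (F * G)ᵀ * Gᵀ = Gᵀ * (κ • (G * F))ᵀ := by
        rw [transpose_mul, transpose_smul, transpose_mul, Matrix.mul_smul, Matrix.smul_mul,
          Matrix.mul_assoc]
    _ = Gᵀ := by rw [h, transpose_one, Matrix.mul_one]

end Projection

section Isometry

variable {m n : Type*} [Fintype m] [Fintype n] [DecidableEq m]
  {F : Matrix n m ℂ} {G : Matrix m n ℂ} {Y : Matrix n m ℂ} {κ : ℂ}

theorem conjugate_eq_left_of_isometry (hF : Fᴴ = Fᵀ) (hY : Yᴴ * Y = 1)
    (hP : Y * Yᴴ = κ • (F * G)ᵀ) : κ • (Yᴴ * Gᵀ * (Yᴴ * F)ᴴ) = 1 := by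
  calc κ • (Yᴴ * Gᵀ * (Yᴴ * F)ᴴ) = Yᴴ * (κ • (F * G)ᵀ) * Y := by
        rw [conjTranspose_mul, conjTranspose_conjTranspose, hF, transpose_mul]
        simp only [Matrix.smul_mul, Matrix.mul_smul, Matrix.mul_assoc]
    _ = Yᴴ * Y * (Yᴴ * Y) := by rw [← hP]; simp only [Matrix.mul_assoc]
    _ = 1 := by rw [hY, Matrix.one_mul]

theorem conjugate_eq_right_of_isometry (hF : Fᴴ = Fᵀ) (hG : Gᴴ = Gᵀ) (hκ : star κ = κ)
    (hGF : κ • (G * F) = 1) (hP : Y * Yᴴ = κ • (F * G)ᵀ) :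
    κ • ((Yᴴ * F)ᵀ * (Yᴴ * Gᵀ)ᴴᵀ) = 1 := by
  -- `Y * Yᴴ` is Hermitian, and real since `F`, `G` and `κ` are, hence symmetric.
  have hPt : (Y * Yᴴ)ᵀ = Y * Yᴴ := by
    calc (Y * Yᴴ)ᵀ = (Y * Yᴴ)ᴴ := by
          rw [hP, conjTranspose_smul, hκ, transpose_smul, transpose_transpose,
            conjTranspose_transpose_eq_transpose_conjTranspose, conjTranspose_mul, hF, hG,
            ← transpose_mul, transpose_transpose]
      _ = Y * Yᴴ := by rw [conjTranspose_mul, conjTranspose_conjTranspose]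
  calc κ • ((Yᴴ * F)ᵀ * (Yᴴ * Gᵀ)ᴴᵀ) = κ • (Fᵀ * (Y * Yᴴ)ᵀ * Gᵀ) := by
        rw [conjTranspose_mul, conjTranspose_conjTranspose, transpose_mul, transpose_mul,
          conjTranspose_transpose_eq_transpose_conjTranspose, transpose_transpose, hG,
          transpose_mul Y]
        simp only [Matrix.mul_assoc]
    _ = (κ • (G * F))ᵀ := by
        rw [hPt, Matrix.mul_assoc, hP, smul_transpose_mul_mul_transpose_eq hGF, transpose_smul,
          transpose_mul]
    _ = 1 := by rw [hGF, transpose_one]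

theorem trace_conjTranspose_mul_self_isometry_mul_transpose (hGF : κ • (G * F) = 1)
    (hP : Y * Yᴴ = κ • (F * G)ᵀ) :
    ((Yᴴ * Gᵀ)ᴴ * (Yᴴ * Gᵀ)).trace = (G * Gᴴ).trace := by
  calc ((Yᴴ * Gᵀ)ᴴ * (Yᴴ * Gᵀ)).trace = ((G * Gᴴ)ᵀ).trace := by
        rw [conjTranspose_mul, conjTranspose_conjTranspose, Matrix.mul_assoc, ← Matrix.mul_assoc Y,
          hP, smul_transpose_mul_mul_transpose_eq hGF, transpose_mul,
          conjTranspose_transpose_eq_transpose_conjTranspose]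
    _ = (G * Gᴴ).trace := trace_transpose _

theorem trace_conjTranspose_mul_self_transpose_isometry_mul (hF : Fᴴ = Fᵀ)
    (hGF : κ • (G * F) = 1) (hP : Y * Yᴴ = κ • (F * G)ᵀ) :
    ((Yᴴ * F)ᵀᴴ * (Yᴴ * F)ᵀ).trace = (Fᴴ * F).trace := by
  calc ((Yᴴ * F)ᵀᴴ * (Yᴴ * F)ᵀ).trace = (Yᴴ * F * (Yᴴ * F)ᴴ).trace := by
        rw [conjTranspose_transpose_eq_transpose_conjTranspose, ← transpose_mul, trace_transpose]
    _ = (Fᵀ * (Y * Yᴴ) * F).trace := by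
        rw [conjTranspose_mul, conjTranspose_conjTranspose, hF, trace_mul_comm]
        simp only [Matrix.mul_assoc]
    _ = (Fᴴ * F).trace := by rw [hP, transpose_mul_smul_transpose_mul_eq hGF, hF]

end Isometry

theorem star_Ev (μ : ℝ) : star (Ev μ) = Ev μ := by
  funext x
  change star (Ev μ x) = Ev μ x
  unfold Ev
  split_ifs <;> simp

theorem estarOneOne3_mul_oneOneE3 (μ : ℝ) :
    estarOneOne3 μ * oneOneE3 μ = (curryLast (Ev μ) * curryFirst (Ev μ))ᵀ := by
  ext p q
  have hE (x) : star (Ev μ x) = Ev μ x := congr_fun (star_Ev μ) x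
  simp only [mul_apply, estarOneOne3, oneOneE3, of_apply, Fintype.sum_prod_type, ite_and,
    ite_mul, mul_ite, zero_mul, mul_zero, hE, transpose_apply, curryLast, curryFirst]
  simp [Finset.sum_ite_eq, Finset.sum_ite_eq']

theorem Pmat3_eq (μ : ℝ) :
    Pmat3 μ = (((μ ^ 2 * (1 + μ ^ 2))⁻¹ : ℝ) : ℂ) • (curryLast (Ev μ) * curryFirst (Ev μ))ᵀ := by
  rw [Pmat3, estarOneOne3_mul_oneOneE3]
  push_cast
  rw [mul_inv]

theorem smul_curryFirst_Ev_mul_curryLast_Ev {μ : ℝ} (hμ : μ ≠ 0) :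
    (((μ ^ 2 * (1 + μ ^ 2))⁻¹ : ℝ) : ℂ) • (curryFirst (Ev μ) * curryLast (Ev μ)) = 1 := by
  have hGF : curryFirst (Ev μ) * curryLast (Ev μ) = ((μ ^ 2 * (1 + μ ^ 2) : ℝ) : ℂ) • 1 := by
    ext i j
    fin_cases i <;> fin_cases j <;>
      simp [mul_apply, Fintype.sum_prod_type, Fin.sum_univ_three, curryFirst, curryLast, Ev] <;>
      ring
  rw [hGF, smul_smul, ← Complex.ofReal_mul, inv_mul_cancel₀ (by positivity), Complex.ofReal_one,
    one_smul]

theorem mul_star_Ev_dotProduct_Ev {μ : ℝ} (hμ : μ ≠ 0) :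
    (((μ ^ 2 * (1 + μ ^ 2))⁻¹ : ℝ) : ℂ) * (star (Ev μ) ⬝ᵥ Ev μ)
      = ((μ ^ 2 + 1 + (μ ^ 2)⁻¹ : ℝ) : ℂ) := by
  have hE : star (Ev μ) ⬝ᵥ Ev μ = (((1 + μ ^ 2) * (1 + μ ^ 2 + μ ^ 4) : ℝ) : ℂ) := by
    rw [star_Ev]
    simp [dotProduct, Fintype.sum_prod_type, Fin.sum_univ_three, Ev]
    ring
  rw [hE, ← Complex.ofReal_mul]
  congr 1
  field_simp
  ring

theorem ystarOne3_mulVec (Y : Matrix (Fin 3 × Fin 3) (Fin 3) ℂ) (e : Fin 3 × Fin 3 × Fin 3 → ℂ) :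
    ystarOne3 Y *ᵥ e = vec (Yᴴ * curryLast e)ᵀ := by
  funext p
  simp only [mulVec, dotProduct, ystarOne3, of_apply, vec, transpose_apply, mul_apply,
    Fintype.sum_prod_type, ite_mul, zero_mul, curryLast]
  simp [Finset.sum_ite_eq]

theorem oneYstar3_mulVec (Y : Matrix (Fin 3 × Fin 3) (Fin 3) ℂ) (e : Fin 3 × Fin 3 × Fin 3 → ℂ) :
    oneYstar3 Y *ᵥ e = vec (Yᴴ * (curryFirst e)ᵀ) := by
  funext p
  simp only [mulVec, dotProduct, oneYstar3, of_apply, vec, transpose_apply, mul_apply,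
    Fintype.sum_prod_type, ite_mul, zero_mul, curryFirst]
  simp [Finset.sum_ite_eq]

theorem vecStarOne3_vec_mul_oneVec3_vec (V W : Matrix (Fin 3) (Fin 3) ℂ) :
    vecStarOne3 (vec V) * oneVec3 (vec W) = W * Vᴴᵀ := by
  ext a b
  simp only [mul_apply, vecStarOne3, oneVec3, vec, of_apply, Fintype.sum_prod_type, ite_mul,
    mul_ite, zero_mul, mul_zero, transpose_apply, conjTranspose_apply]
  simp [Finset.sum_ite_eq, Finset.sum_ite_eq', mul_comm]

theorem conjugate_equations_su3_general (μ : ℝ) (hμ0 : μ ≠ 0)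
    (Y : Matrix (Fin 3 × Fin 3) (Fin 3) ℂ) (hY1 : Yᴴ * Y = 1) (hY2 : Y * Yᴴ = Pmat3 μ) :
    vecStarOne3 (tvec3 μ Y) * oneVec3 (svec3 μ Y) = 1 ∧
    vecStarOne3 (svec3 μ Y) * oneVec3 (tvec3 μ Y) = 1 ∧
    star (svec3 μ Y) ⬝ᵥ svec3 μ Y = ((μ ^ 2 + 1 + (μ ^ 2)⁻¹ : ℝ) : ℂ) ∧
    star (tvec3 μ Y) ⬝ᵥ tvec3 μ Y = ((μ ^ 2 + 1 + (μ ^ 2)⁻¹ : ℝ) : ℂ) := by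
  set F := curryLast (Ev μ)
  set G := curryFirst (Ev μ)
  set κ : ℂ := (((μ ^ 2 * (1 + μ ^ 2))⁻¹ : ℝ) : ℂ)
  set c : ℂ := ((μ⁻¹ : ℝ) : ℂ) * (((Real.sqrt (1 + μ ^ 2))⁻¹ : ℝ) : ℂ) with hc_def
  have hF : Fᴴ = Fᵀ := conjTranspose_curryLast (star_Ev μ)
  have hG : Gᴴ = Gᵀ := conjTranspose_curryFirst (star_Ev μ)
  have hκ : star κ = κ := Complex.conj_ofReal _
  have hGF : κ • (G * F) = 1 := smul_curryFirst_Ev_mul_curryLast_Ev hμ0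
  have hP : Y * Yᴴ = κ • (F * G)ᵀ := hY2.trans (Pmat3_eq μ)
  have hc : star c * c = κ := by
    rw [hc_def, ← Complex.ofReal_mul, Complex.star_def, Complex.conj_ofReal, ← Complex.ofReal_mul]
    congr 1
    field_simp
    rw [Real.sq_sqrt (by positivity)]
  have hs : svec3 μ Y = vec (c • (Yᴴ * Gᵀ)) := by rw [svec3, oneYstar3_mulVec, vec_smul]
  have ht : tvec3 μ Y = vec (c • (Yᴴ * F)ᵀ) := by rw [tvec3, ystarOne3_mulVec, vec_smul]
  rw [hs, ht, vecStarOne3_vec_mul_oneVec3_vec, vecStarOne3_vec_mul_oneVec3_vec,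
    star_vec_dotProduct_vec, star_vec_dotProduct_vec]
  simp only [conjTranspose_smul, transpose_smul, Matrix.smul_mul, Matrix.mul_smul, smul_smul,
    trace_smul]
  rw [hc, mul_comm c, hc, smul_eq_mul, smul_eq_mul]
  refine ⟨conjugate_eq_left_of_isometry hF hY1 hP,
    conjugate_eq_right_of_isometry hF hG hκ hGF hP, ?_, ?_⟩
  · rw [trace_conjTranspose_mul_self_isometry_mul_transpose hGF hP,
      trace_curryFirst_mul_conjTranspose_self, mul_star_Ev_dotProduct_Ev hμ0]
  · rw [trace_conjTranspose_mul_self_transpose_isometry_mul hF hGF hP,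
      trace_conjTranspose_curryLast_mul_self, mul_star_Ev_dotProduct_Ev hμ0]

/-- For any isometry `Y` with `YY* = P`, the maps `s, t : ℂ → ℂ³ ⊗ ℂ³` solve the conjugate
equations `(t* ⊗ 1)(1 ⊗ s) = 1` and `(s* ⊗ 1)(1 ⊗ t) = 1`; moreover
`s*s = t*t = μ² + 1 + μ⁻²`. -/
theorem conjugate_equations_su3 (μ : ℝ) (hμ1 : -1 < μ) (hμ2 : μ < 1) (hμ0 : μ ≠ 0)
    (Y : Matrix (Fin 3 × Fin 3) (Fin 3) ℂ) (hY1 : Yᴴ * Y = 1) (hY2 : Y * Yᴴ = Pmat3 μ) :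
    vecStarOne3 (tvec3 μ Y) * oneVec3 (svec3 μ Y) = 1 ∧
    vecStarOne3 (svec3 μ Y) * oneVec3 (tvec3 μ Y) = 1 ∧
    star (svec3 μ Y) ⬝ᵥ svec3 μ Y = ((μ ^ 2 + 1 + (μ ^ 2)⁻¹ : ℝ) : ℂ) ∧
    star (tvec3 μ Y) ⬝ᵥ tvec3 μ Y = ((μ ^ 2 + 1 + (μ ^ 2)⁻¹ : ℝ) : ℂ) :=
  conjugate_equations_su3_general μ hμ0 Y hY1 hY2
end
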